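/- If φ ∈ H, A ≥ 0 and a > 0 satisfy ‖φ‖ ≤ A + a·‖Tφ‖, then for every k of the form k = 2^l, l = 0, 1, 2, ..., one has ‖φ‖ ≤ k·A + 8^{k−1}·a^k·‖T^k φ‖. -/

import Mathlib

/-!
Since `T` is self-adjoint, `‖Tᵏφ‖² = re ⟪φ, T²ᵏφ⟫ ≤ ‖φ‖ ‖T²ᵏφ‖`, and by AM-GM
`2c‖Tᵏφ‖ ≤ ‖φ‖ + c²‖T²ᵏφ‖`. Feeding this into `‖φ‖ ≤ kA + c‖Tᵏφ‖` gives
`‖φ‖ ≤ 2kA + c²‖T²ᵏφ‖`, so starting from `k = 1, c = a` the doubling yields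
`‖φ‖ ≤ kA + aᵏ‖Tᵏφ‖` for `k = 2ˡ`; the factor `8ᵏ⁻¹ ≥ 1` is then harmless.
-/

theorem IsSelfAdjoint.norm_apply_sq_le {𝕜 E : Type*} [RCLike 𝕜] [NormedAddCommGroup E]
    [InnerProductSpace 𝕜 E] [CompleteSpace E] {S : E →L[𝕜] E} (hS : IsSelfAdjoint S) (x : E) :
    ‖S x‖ ^ 2 ≤ ‖x‖ * ‖(S ^ 2) x‖ := by
  rw [S.apply_norm_sq_eq_inner_adjoint_right, ContinuousLinearMap.isSelfAdjoint_iff'.mp hS]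
  exact (RCLike.re_le_norm _).trans (norm_inner_le_norm _ _)

theorem le_two_mul_add_sq_mul_of_le_add_mul {N M x B c : ℝ} (hN : 0 ≤ N) (hM : 0 ≤ M)
    (hx : x ^ 2 ≤ N * M) (h : N ≤ B + c * x) : N ≤ 2 * B + c ^ 2 * M := by
  have amgm : 2 * (c * x) ≤ N + c ^ 2 * M := by
    refine (le_abs_self _).trans (abs_le_of_sq_le_sq ?_ (by positivity))
    nlinarith [sq_nonneg (N - c ^ 2 * M), mul_le_mul_of_nonneg_left hx (sq_nonneg c)]
  linarith

theorem IsSelfAdjoint.norm_le_pow_two_mul_add {𝕜 E : Type*} [RCLike 𝕜] [NormedAddCommGroup E]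
    [InnerProductSpace 𝕜 E] [CompleteSpace E] {T : E →L[𝕜] E} (hT : IsSelfAdjoint T)
    {φ : E} {A a : ℝ} (h : ‖φ‖ ≤ A + a * ‖T φ‖) (l : ℕ) :
    ‖φ‖ ≤ 2 ^ l * A + a ^ 2 ^ l * ‖(T ^ 2 ^ l) φ‖ := by
  induction l with
  | zero => simpa using h
  | succ l ih =>
    rw [pow_succ (2 : ℕ), pow_mul, pow_mul, pow_succ (2 : ℝ), mul_comm _ (2 : ℝ), mul_assoc]
    exact le_two_mul_add_sq_mul_of_le_add_mul (norm_nonneg _) (norm_nonneg _)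
      ((hT.pow (2 ^ l)).norm_apply_sq_le φ) ih

theorem stmt_3 {H : Type*} [NormedAddCommGroup H] [InnerProductSpace ℂ H]
    [CompleteSpace H] (T : H →L[ℂ] H) (hT : IsSelfAdjoint T)
    (φ : H) (A a : ℝ) (ha : 0 < a)
    (h : ‖φ‖ ≤ A + a * ‖T φ‖) :
    ∀ l : ℕ, ‖φ‖ ≤ (2 ^ l : ℕ) * A + 8 ^ (2 ^ l - 1) * a ^ (2 ^ l) * ‖(T ^ (2 ^ l)) φ‖ := by
  intro l
  have h8 : a ^ 2 ^ l ≤ 8 ^ (2 ^ l - 1) * a ^ 2 ^ l :=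
    le_mul_of_one_le_left (by positivity) (one_le_pow₀ (by norm_num))
  rw [Nat.cast_pow, Nat.cast_ofNat]
  calc ‖φ‖ ≤ 2 ^ l * A + a ^ 2 ^ l * ‖(T ^ 2 ^ l) φ‖ := hT.norm_le_pow_two_mul_add h l
    _ ≤ _ := by gcongr
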